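/- For every x in (0,1], if x ∈ [1/(2k+1), 1/(2k-1)) for some integer k ≥ 1, then applying the even Farey map F_e exactly k times to x equals the even Gauss map T_e applied to x. -/

import Mathlib

/-- The even Farey (Romik) map on [0,1]. -/
noncomputable def evenFarey (x : ℝ) : ℝ :=
  if x < 1/3 then x / (1 - 2*x)
  else if x < 1/2 then (1 - 2*x) / x
  else (2*x - 1) / x

/-- The even Gauss map on [0,1]. -/
noncomputable def evenGauss (x : ℝ) : ℝ :=
  if x = 0 then 0 else |1/x - 2 * (round (1/(2*x)) : ℤ)|

/-!
On `[0, 1/3)` the even Farey map is `x ↦ x / (1 - 2x)`, which subtracts `2` from `1/x`, while the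
even Gauss map only depends on `1/x` modulo `2`. This step maps `[1/(2k+3), 1/(2k+1))` onto
`[1/(2k+1), 1/(2k-1))`, so after `k - 1` steps we reach `[1/3, 1)`, where the two maps agree.
-/

lemma evenFarey_of_lt_one_third {x : ℝ} (hx : x < 1 / 3) : evenFarey x = x / (1 - 2 * x) :=
  if_pos hx

lemma evenGauss_div_one_sub_two_mul {x : ℝ} (hx : x ≠ 0) (hx' : 1 - 2 * x ≠ 0) :
    evenGauss (x / (1 - 2 * x)) = evenGauss x := by
  have h_inv : 1 / (x / (1 - 2 * x)) = 1 / x - 2 := by field_simp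
  have h_half_inv : 1 / (2 * (x / (1 - 2 * x))) = 1 / (2 * x) - (1 : ℤ) := by
    push_cast; field_simp
  rw [evenGauss, evenGauss, if_neg (div_ne_zero hx hx'), if_neg hx, h_inv, h_half_inv,
    round_sub_intCast]
  push_cast
  ring_nf

lemma evenFarey_eq_evenGauss_of_mem_Ico {x : ℝ} (hx : x ∈ Set.Ico (1 / 3) 1) :
    evenFarey x = evenGauss x := by
  obtain ⟨h1, h2⟩ := hx
  have hx0 : 0 < x := by linarith
  rcases h1.eq_or_lt with rfl | h1
  · -- `round` sends `3/2` up to `2`, and indeed `|3 - 2 * 2| = 1 = |3 - 2 * 1|`.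
    have : round ((3 : ℝ) / 2) = 2 := by rw [round_eq]; norm_num
    norm_num [evenFarey, evenGauss, this]
  have hround : round (1 / (2 * x)) = 1 := by
    rw [round_eq_iff, Set.mem_Ico, le_div_iff₀ (by positivity), div_lt_iff₀ (by positivity)]
    constructor <;> push_cast <;> linarith
  rw [evenFarey, evenGauss, if_neg hx0.ne', if_neg (not_lt.2 h1.le), hround, Int.cast_one]
  split_ifs with h
  · rw [abs_of_nonneg (by rw [sub_nonneg, le_div_iff₀ hx0]; linarith)]
    field_simp
  · rw [abs_of_nonpos (by rw [sub_nonpos, div_le_iff₀ hx0]; linarith)]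
    field_simp
    ring

lemma one_le_of_mem_Ico_one_div_odd {x : ℝ} {k : ℕ}
    (hx : x ∈ Set.Ico (1 / (2 * (k : ℝ) + 1)) (1 / (2 * (k : ℝ) - 1))) : 1 ≤ k := by
  rcases Nat.eq_zero_or_pos k with rfl | hk
  · norm_num at hx
  · exact hk

lemma div_one_sub_two_mul_mem_Ico {x k : ℝ} (hk : 1 / 2 < k)
    (hx : x ∈ Set.Ico (1 / (2 * (k + 1) + 1)) (1 / (2 * (k + 1) - 1))) :
    x / (1 - 2 * x) ∈ Set.Ico (1 / (2 * k + 1)) (1 / (2 * k - 1)) := by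
  obtain ⟨h1, h2⟩ := hx
  rw [div_le_iff₀ (by linarith)] at h1
  rw [lt_div_iff₀ (by linarith)] at h2
  have hd : 0 < 1 - 2 * x := by nlinarith
  constructor
  · rw [div_le_div_iff₀ (by linarith) hd]; nlinarith
  · rw [div_lt_div_iff₀ hd (by linarith)]; nlinarith

theorem evenFarey_iterate_eq_evenGauss_general (x : ℝ) (k : ℕ)
    (hxk : x ∈ Set.Ico (1 / (2*(k:ℝ) + 1)) (1 / (2*(k:ℝ) - 1))) :
    evenFarey^[k] x = evenGauss x := by
  have hk : 1 ≤ k := one_le_of_mem_Ico_one_div_odd hxk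
  induction k, hk using Nat.le_induction generalizing x with
  | base => simpa using evenFarey_eq_evenGauss_of_mem_Ico (by norm_num at hxk; exact hxk)
  | succ k hk ih =>
    push_cast at hxk
    have hk' : (1 : ℝ) ≤ k := by exact_mod_cast hk
    have hx0 : 0 < x := lt_of_lt_of_le (by positivity) hxk.1
    have hx3 : x < 1 / 3 := hxk.2.trans_le (by gcongr; linarith)
    rw [Function.iterate_succ_apply, evenFarey_of_lt_one_third hx3,
      ih _ (div_one_sub_two_mul_mem_Ico (by linarith) hxk),
      evenGauss_div_one_sub_two_mul hx0.ne' (by linarith)]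

theorem evenFarey_iterate_eq_evenGauss (x : ℝ) (hx : x ∈ Set.Ioc (0:ℝ) 1)
    (k : ℕ) (hk : 1 ≤ k)
    (hxk : x ∈ Set.Ico (1 / (2*(k:ℝ) + 1)) (1 / (2*(k:ℝ) - 1))) :
    evenFarey^[k] x = evenGauss x :=
  evenFarey_iterate_eq_evenGauss_general x k hxk
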